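/- For the two-player visibility game, the set [0, 0.5]^2 is an equilibrium cycle. -/
import Mathlib


open Set Function

variable {ι : Type*} [Fintype ι] [DecidableEq ι] {α : ι → Type*}

/-- Stability condition (1) of an equilibrium cycle: for every player `i` and every
opponent profile lying in `E`, some action in `E i` strictly outperforms every
action in `A i \ E i`. -/
def Stability (A E : ∀ i, Set (α i)) (U : ι → (∀ j, α j) → ℝ) : Prop :=
  ∀ (i : ι) (a : ∀ j, α j), (∀ j, j ≠ i → a j ∈ E j) →
    ∃ b ∈ E i, ∀ c ∈ A i \ E i,
      U i (update a i b) > U i (update a i c)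

/-- Unrest condition (2) of an equilibrium cycle: at every profile in `E`, some player
has a strictly improving deviation inside `E i` that also strictly outperforms every
action in `A i \ E i`. -/
def Unrest (A E : ∀ i, Set (α i)) (U : ι → (∀ j, α j) → ℝ) : Prop :=
  ∀ a : ∀ j, α j, (∀ j, a j ∈ E j) →
    ∃ i, ∃ b ∈ E i, U i (update a i b) > U i a ∧
      ∀ c ∈ A i \ E i, U i (update a i b) > U i (update a i c)

/-- Equilibrium cycle: a nonempty closed Cartesian product set satisfying
stability, unrest, and minimality (no nonempty closed Cartesian product strict
subset satisfies stability and unrest). -/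
def IsEquilibriumCycle [∀ i, MetricSpace (α i)] (A E : ∀ i, Set (α i))
    (U : ι → (∀ j, α j) → ℝ) : Prop :=
  (∀ i, (E i).Nonempty) ∧ (∀ i, E i ⊆ A i) ∧ (∀ i, IsClosed (E i)) ∧
  Stability A E U ∧ Unrest A E U ∧
  ∀ F : ∀ i, Set (α i), (∀ i, (F i).Nonempty) → (∀ i, IsClosed (F i)) →
    Set.pi Set.univ F ⊂ Set.pi Set.univ E → ¬(Stability A F U ∧ Unrest A F U)

/-- Pure Nash equilibrium of the game with action sets `A` and utilities `U`. -/
def IsPureNash (A : ∀ i, Set (α i)) (U : ι → (∀ j, α j) → ℝ)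
    (a : ∀ j, α j) : Prop :=
  (∀ j, a j ∈ A j) ∧ ∀ i, ∀ b ∈ A i, U i a ≥ U i (update a i b)

/-- Payoff in the two-player visibility game: own action `x`, opponent action `y`. -/
noncomputable def visPay (x y : ℝ) : ℝ :=
  if x < y then y - x else if x = y then 0 else 1 - x

/-- The opponent of a player in a two-player game. -/
def opp : Fin 2 → Fin 2 := fun i => if i = 0 then 1 else 0

/-- Utility functions of the two-player visibility game. -/
noncomputable def visU : Fin 2 → (Fin 2 → ℝ) → ℝ := fun i a => visPay (a i) (a (opp i))

/-- Action sets of the visibility game: `[0, 1]` for each player. -/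
def visA : Fin 2 → Set ℝ := fun _ => Set.Icc 0 1

/-- The candidate equilibrium cycle `[0, 0.5]²`. -/
def visE : Fin 2 → Set ℝ := fun _ => Set.Icc 0 (1 / 2)

section VisibilityHelpers

lemma vis_oppne : ∀ i : Fin 2, opp i ≠ i := by decide

lemma vis_eq_opp_of_ne : ∀ i j : Fin 2, j ≠ i → j = opp i := by decide

lemma vis_opp_opp : ∀ i : Fin 2, opp (opp i) = i := by decide

lemma vis_fin2_cases : ∀ j i : Fin 2, j = i ∨ j = opp i := by decide

lemma visPay_of_lt {x y : ℝ} (h : x < y) : visPay x y = y - x := if_pos h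

lemma visPay_self (x : ℝ) : visPay x x = 0 := by simp [visPay]

lemma visPay_of_gt {x y : ℝ} (h : y < x) : visPay x y = 1 - x := by
  rw [visPay, if_neg (not_lt.2 h.le), if_neg (ne_of_gt h)]

lemma visU_eq (i : Fin 2) (a : Fin 2 → ℝ) : visU i a = visPay (a i) (a (opp i)) := rfl

lemma visU_update (a : Fin 2 → ℝ) (i : Fin 2) (b : ℝ) :
    visU i (Function.update a i b) = visPay b (a (opp i)) := by
  rw [visU_eq, Function.update_self, Function.update_of_ne (vis_oppne i)]

lemma vis_mem_diff {i : Fin 2} {c : ℝ} (h : c ∈ visA i \ visE i) : 1/2 < c ∧ c ≤ 1 := by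
  obtain ⟨⟨hc0, hc1⟩, hcn⟩ := h
  refine ⟨?_, hc1⟩
  by_contra h'
  exact hcn ⟨hc0, not_lt.1 h'⟩

lemma vis_stab : Stability visA visE visU := by
  intro i a ha
  have hy : a (opp i) ∈ visE (opp i) := ha (opp i) (vis_oppne i)
  obtain ⟨hy0, hy2⟩ := hy
  rcases lt_or_eq_of_le hy2 with h | h
  · refine ⟨1/2, ⟨by norm_num, le_refl _⟩, ?_⟩
    intro c hc
    obtain ⟨hc1, hc2⟩ := vis_mem_diff hc
    rw [visU_update, visU_update, visPay_of_gt h, visPay_of_gt (lt_trans h hc1)]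
    linarith
  · refine ⟨0, ⟨le_refl _, by norm_num⟩, ?_⟩
    intro c hc
    obtain ⟨hc1, hc2⟩ := vis_mem_diff hc
    rw [visU_update, visU_update, visPay_of_lt (by linarith : (0:ℝ) < a (opp i)),
      visPay_of_gt (by linarith)]
    linarith

lemma vis_unrest : Unrest visA visE visU := by
  intro a ha
  obtain ⟨hx0, hx2⟩ := ha 0
  obtain ⟨hy0, hy2⟩ := ha 1
  set x := a 0 with hxdef
  set y := a 1 with hydef
  have ho0 : a (opp 0) = y := rfl
  have ho1 : a (opp 1) = x := rfl
  have hU0 : visU 0 a = visPay x y := rfl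
  have hU1 : visU 1 a = visPay y x := rfl
  rcases lt_or_eq_of_le hy2 with hy | hy
  · rcases le_or_gt x y with hxy | hxy
    · -- player 0 deviates to 1/2
      refine ⟨0, 1/2, ⟨by norm_num, le_refl _⟩, ?_, ?_⟩
      · rw [visU_update, ho0, visPay_of_gt hy, hU0]
        rcases lt_or_eq_of_le hxy with h | h
        · rw [visPay_of_lt h]; linarith
        · rw [h, visPay_self]; linarith
      · intro c hc
        obtain ⟨hc1, hc2⟩ := vis_mem_diff hc
        rw [visU_update, visU_update, ho0, visPay_of_gt hy, visPay_of_gt (by linarith)]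
        linarith
    · rcases lt_or_eq_of_le hx2 with hx | hx
      · -- player 1 deviates to 1/2
        refine ⟨1, 1/2, ⟨by norm_num, le_refl _⟩, ?_, ?_⟩
        · rw [visU_update, ho1, visPay_of_gt hx, hU1, visPay_of_lt hxy]; linarith
        · intro c hc
          obtain ⟨hc1, hc2⟩ := vis_mem_diff hc
          rw [visU_update, visU_update, ho1, visPay_of_gt hx, visPay_of_gt (by linarith)]
          linarith
      · -- x = 1/2
        rcases lt_or_eq_of_le hy0 with hy0' | hy0'
        · -- y > 0 : player 1 deviates to 0
          refine ⟨1, 0, ⟨le_refl _, by norm_num⟩, ?_, ?_⟩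
          · rw [visU_update, ho1, visPay_of_lt (by linarith : (0:ℝ) < x), hU1,
              visPay_of_lt hxy]
            linarith
          · intro c hc
            obtain ⟨hc1, hc2⟩ := vis_mem_diff hc
            rw [visU_update, visU_update, ho1, visPay_of_lt (by linarith : (0:ℝ) < x),
              visPay_of_gt (by linarith)]
            linarith
        · -- y = 0, x = 1/2 : player 0 deviates to 1/4
          refine ⟨0, 1/4, ⟨by norm_num, by norm_num⟩, ?_, ?_⟩
          · rw [visU_update, ho0, visPay_of_gt (by rw [← hy0']; norm_num), hU0,
              visPay_of_gt (by rw [← hy0']; linarith)]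
            linarith
          · intro c hc
            obtain ⟨hc1, hc2⟩ := vis_mem_diff hc
            rw [visU_update, visU_update, ho0, visPay_of_gt (by rw [← hy0']; norm_num),
              visPay_of_gt (by rw [← hy0']; linarith)]
            linarith
  · -- y = 1/2
    rcases lt_or_eq_of_le hx0 with hx0' | hx0'
    · -- x > 0 : player 0 deviates to 0
      refine ⟨0, 0, ⟨le_refl _, by norm_num⟩, ?_, ?_⟩
      · rw [visU_update, ho0, visPay_of_lt (by linarith : (0:ℝ) < y), hU0]
        rcases lt_trichotomy x y with h | h | h
        · rw [visPay_of_lt h]; linarith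
        · rw [h, visPay_self]; linarith
        · rw [visPay_of_gt h]; linarith
      · intro c hc
        obtain ⟨hc1, hc2⟩ := vis_mem_diff hc
        rw [visU_update, visU_update, ho0, visPay_of_lt (by linarith : (0:ℝ) < y),
          visPay_of_gt (by linarith)]
        linarith
    · -- x = 0, y = 1/2 : player 1 deviates to 1/4
      refine ⟨1, 1/4, ⟨by norm_num, by norm_num⟩, ?_, ?_⟩
      · rw [visU_update, ho1, visPay_of_gt (by rw [← hx0']; norm_num), hU1,
          visPay_of_gt (by rw [← hx0']; linarith)]
        linarith
      · intro c hc
        obtain ⟨hc1, hc2⟩ := vis_mem_diff hc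
        rw [visU_update, visU_update, ho1, visPay_of_gt (by rw [← hx0']; norm_num),
          visPay_of_gt (by rw [← hx0']; linarith)]
        linarith

lemma vis_min : ∀ F : ∀ _ : Fin 2, Set ℝ, (∀ i, (F i).Nonempty) → (∀ i, IsClosed (F i)) →
    Set.pi Set.univ F ⊂ Set.pi Set.univ visE → ¬(Stability visA F visU ∧ Unrest visA F visU) := by
  intro F hFne hFcl hss
  rintro ⟨hS, hU⟩
  -- F i ⊆ [0, 1/2]
  have hsub : ∀ i, F i ⊆ Set.Icc (0:ℝ) (1/2) := by
    intro i x hx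
    have ha : (Function.update (fun j => (hFne j).some) i x) ∈ Set.pi Set.univ F := by
      intro j _
      rcases eq_or_ne j i with h | h
      · subst h; rw [Function.update_self]; exact hx
      · rw [Function.update_of_ne h]; exact (hFne j).some_mem
    have := hss.1 ha i (Set.mem_univ i)
    rwa [Function.update_self] at this
  have hbdd : ∀ i, BddAbove (F i) := fun i => ⟨1/2, fun x hx => (hsub i hx).2⟩
  -- Lemma A : stability forces an interval above any opponent action < 1/2
  have lemA : ∀ (i : Fin 2) (y : ℝ), y ∈ F (opp i) → y < 1/2 →
      ∃ t, y < t ∧ Set.Ioc y t ⊆ F i := by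
    intro i y hyF hy2
    have hy0 : 0 ≤ y := (hsub _ hyF).1
    obtain ⟨b, hbF, hb⟩ := hS i (fun _ => y)
      (fun j hj => by rw [vis_eq_opp_of_ne i j hj]; exact hyF)
    have hb0 : 0 ≤ b := (hsub _ hbF).1
    have hb2 : b ≤ 1/2 := (hsub _ hbF).2
    have hple : visPay b y < 1 - y ∧ 0 ≤ visPay b y := by
      rcases lt_trichotomy b y with h | h | h
      · rw [visPay_of_lt h]; constructor <;> linarith
      · rw [h, visPay_self]; constructor <;> linarith
      · rw [visPay_of_gt h]; constructor <;> linarith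
    refine ⟨1 - visPay b y, by linarith [hple.1], ?_⟩
    rintro c ⟨hc1, hc2⟩
    by_contra hcF
    have hdom := hb c ⟨⟨by linarith, by linarith [hple.2]⟩, hcF⟩
    rw [visU_update, visU_update] at hdom
    rw [visPay_of_gt hc1] at hdom
    linarith
  -- sSup (F i) = 1/2, hence 1/2 ∈ F i
  have hclS : ∀ i, sSup (F i) ∈ F i := by
    intro i
    have := csSup_mem_closure (hFne i) (hbdd i)
    rwa [(hFcl i).closure_eq] at this
  have lemB : ∀ i : Fin 2, (1:ℝ)/2 ∈ F i := by
    intro i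
    have hsle : sSup (F i) ≤ 1/2 := csSup_le (hFne i) (fun x hx => (hsub i hx).2)
    rcases eq_or_lt_of_le hsle with h | h
    · have := hclS i; rwa [h] at this
    · exfalso
      obtain ⟨t, ht, hI⟩ := lemA (opp i) (sSup (F i))
        (by rw [vis_opp_opp]; exact hclS i) h
      set y := min t ((sSup (F i) + 1/2)/2) with hydef
      have hy1 : sSup (F i) < y := lt_min ht (by linarith)
      have hy2 : y < 1/2 := lt_of_le_of_lt (min_le_right _ _) (by linarith)
      have hyF : y ∈ F (opp i) := hI ⟨hy1, min_le_left _ _⟩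
      obtain ⟨t', ht', hI'⟩ := lemA i y hyF hy2
      have hz : t' ∈ F i := hI' ⟨ht', le_refl _⟩
      have := le_csSup (hbdd i) hz
      linarith
  -- 0 ∈ F i
  have lemC : ∀ i : Fin 2, (0:ℝ) ∈ F i := by
    intro i
    by_contra h0
    obtain ⟨b, hbF, hb⟩ := hS i (fun _ => 1/2) (fun j _ => lemB j)
    have hdom := hb 0 ⟨⟨le_refl _, by norm_num⟩, h0⟩
    rw [visU_update, visU_update] at hdom
    rw [visPay_of_lt (by norm_num : (0:ℝ) < 1/2)] at hdom
    have hb0 : 0 ≤ b := (hsub _ hbF).1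
    have hb2 : b ≤ 1/2 := (hsub _ hbF).2
    have hbne : (0:ℝ) < b :=
      lt_of_le_of_ne hb0 (fun h => h0 (by rw [← h] at hbF; exact hbF))
    rcases lt_or_eq_of_le hb2 with h | h
    · rw [visPay_of_lt h] at hdom; linarith
    · rw [h, visPay_self] at hdom; linarith
  -- Unrest at the profile (a i = 1/2, a (opp i) = 0) forces an initial interval in F i
  have lemD : ∀ i : Fin 2, ∃ b, 0 < b ∧ b ≤ 1/2 ∧ Set.Icc 0 b ⊆ F i := by
    intro i
    set a : Fin 2 → ℝ := Function.update (fun _ => 0) i (1/2) with hadef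
    have hai : a i = 1/2 := Function.update_self _ _ _
    have hao : a (opp i) = 0 := Function.update_of_ne (vis_oppne i) _ _
    have haF : ∀ j, a j ∈ F j := by
      intro j
      rcases vis_fin2_cases j i with h | h
      · subst h; rw [hai]; exact lemB j
      · subst h; rw [hao]; exact lemC _
    obtain ⟨j, b, hbF, himp, hdom⟩ := hU a haF
    have hb0 : 0 ≤ b := (hsub _ hbF).1
    have hb2 : b ≤ 1/2 := (hsub _ hbF).2
    have hj : j = i := by
      rcases vis_fin2_cases j i with h | h
      · exact h
      · exfalso
        subst h
        rw [visU_update, visU_eq, hao, vis_opp_opp, hai,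
          visPay_of_lt (by norm_num : (0:ℝ) < 1/2)] at himp
        rcases lt_trichotomy b (1/2) with h' | h' | h'
        · rcases lt_or_eq_of_le hb0 with h0 | h0
          · rw [visPay_of_lt h'] at himp; linarith
          · rw [← h0, visPay_of_lt (by norm_num : (0:ℝ) < 1/2)] at himp; linarith
        · rw [h', visPay_self] at himp; linarith
        · linarith
    subst hj
    rw [visU_update, visU_eq, hai, hao,
      visPay_of_gt (by norm_num : (0:ℝ) < 1/2)] at himp
    have hbpos : 0 < b := by
      rcases lt_or_eq_of_le hb0 with h0 | h0
      · exact h0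
      · exfalso; rw [← h0, visPay_self] at himp; linarith
    rw [visPay_of_gt hbpos] at himp
    refine ⟨b, hbpos, hb2, ?_⟩
    rintro c ⟨hc0, hcb⟩
    by_contra hcF
    have hcpos : 0 < c :=
      lt_of_le_of_ne hc0 (fun h => hcF (by rw [← h]; exact lemC _))
    have h := hdom c ⟨⟨hc0, by linarith⟩, hcF⟩
    rw [visU_update, visU_update, hao, visPay_of_gt hbpos, visPay_of_gt hcpos] at h
    linarith
  -- the maximal initial interval
  set S : Fin 2 → Set ℝ := fun i => {b | 0 < b ∧ b ≤ 1/2 ∧ Set.Icc 0 b ⊆ F i} with hSdef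
  have hSne : ∀ i, (S i).Nonempty := fun i => by
    obtain ⟨b, h1, h2, h3⟩ := lemD i; exact ⟨b, h1, h2, h3⟩
  have hSbdd : ∀ i, BddAbove (S i) := fun i => ⟨1/2, fun x hx => hx.2.1⟩
  set t : Fin 2 → ℝ := fun i => sSup (S i) with htdef
  have htmem : ∀ i, 0 < t i ∧ t i ≤ 1/2 ∧ Set.Icc 0 (t i) ⊆ F i := by
    intro i
    obtain ⟨b0, hb0, hb2, hbI⟩ := lemD i
    have h1 : b0 ≤ t i := le_csSup (hSbdd i) ⟨hb0, hb2, hbI⟩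
    have h2 : t i ≤ 1/2 := csSup_le (hSne i) (fun x hx => hx.2.1)
    refine ⟨lt_of_lt_of_le hb0 h1, h2, ?_⟩
    rintro c ⟨hc0, hct⟩
    rcases lt_or_eq_of_le hct with h | h
    · obtain ⟨s, hsS, hs⟩ := exists_lt_of_lt_csSup (hSne i) h
      exact hsS.2.2 ⟨hc0, hs.le⟩
    · have hcl : t i ∈ closure (S i) := csSup_mem_closure (hSne i) (hSbdd i)
      have hSF : S i ⊆ F i := fun x hx => hx.2.2 ⟨hx.1.le, le_refl x⟩
      have : t i ∈ F i := by
        have := closure_mono hSF hcl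
        rwa [(hFcl i).closure_eq] at this
      rwa [h]
  have key : ∀ i, t i < 1/2 → t i ≤ t (opp i) → False := by
    intro i ht2 hle
    have hti := htmem i
    have htoi := htmem (opp i)
    have hmem : t i ∈ F (opp i) := htoi.2.2 ⟨hti.1.le, hle⟩
    obtain ⟨t', ht', hI⟩ := lemA i (t i) hmem ht2
    set s := min t' ((t i + 1/2)/2) with hsdef
    have hs1 : t i < s := lt_min ht' (by linarith [hti.1])
    have hs2 : s ≤ 1/2 := le_trans (min_le_right _ _) (by linarith)
    have hsF : Set.Icc 0 s ⊆ F i := by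
      rintro c ⟨hc0, hcs⟩
      rcases le_or_gt c (t i) with h | h
      · exact hti.2.2 ⟨hc0, h⟩
      · exact hI ⟨h, le_trans hcs (min_le_left _ _)⟩
    have : s ≤ t i := le_csSup (hSbdd i) ⟨lt_trans hti.1 hs1, hs2, hsF⟩
    linarith
  have ht12 : ∀ i, t i = 1/2 := by
    intro i
    by_contra h
    have h' : t i < 1/2 := lt_of_le_of_ne (htmem i).2.1 h
    rcases le_or_gt (t i) (t (opp i)) with h2 | h2
    · exact key i h' h2
    · exact key (opp i) (lt_trans h2 h') (by rw [vis_opp_opp]; exact h2.le)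
  have hFE : ∀ i, F i = visE i := by
    intro i
    apply subset_antisymm (hsub i)
    have := (htmem i).2.2
    rw [ht12 i] at this
    exact this
  exact hss.ne (by rw [funext hFE])

end VisibilityHelpers


/-- For the two-player visibility game, `[0, 0.5]²` is an equilibrium cycle. -/
theorem visibility_ec : IsEquilibriumCycle visA visE visU := by
  refine ⟨fun i => ⟨0, ?_⟩, fun i => Set.Icc_subset_Icc le_rfl (by norm_num),
    fun i => isClosed_Icc, vis_stab, vis_unrest, vis_min⟩
  exact ⟨le_refl _, by norm_num⟩
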